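/- arXiv:1802.09072 — 2 statements merged into one kernel-verified Lean document; each statement's English description precedes it below -/
import Mathlib

section
/- Let (X, μ) be a measure space, ρ : X → (0,∞) measurable, n ≥ 2, n' = n/(n-1), 0 ≤ β < n, and N a seminorm on measurable functions. Assume the Hardy-type inequality: for every q ≥ n there is C(q) > 0 with (∫ |f|^q ρ^{-β} dμ)^{1/q} ≤ C(q) · q^{1-1/n} · N(f) for all f, and suppose C(q) ≤ C uniformly for q ≥ n. Then for every α with 0 ≤ α < 1/(n'·e·C^{n'}) there is a finite constant K such that ∫ ρ^{-β} (exp(α|f|^{n'}) − ∑_{k=0}^{n-2} α^k |f|^{kn'}/k!) dμ ≤ K for all f with N(f) ≤ 1. -/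
open Real MeasureTheory ENNReal

lemma aux_real (C n' α : ℝ) (hC : 0 < C) (hn' : 0 < n') (hα : 0 ≤ α) (m : ℕ) :
    α ^ m / (Nat.factorial m : ℝ) * (C * ((m : ℝ) * n') ^ (1 / n')) ^ ((m : ℝ) * n')
      ≤ (α * (n' * Real.exp 1 * C ^ n')) ^ m := by
  set q : ℝ := (m : ℝ) * n' with hq
  have hq0 : 0 ≤ q := by positivity
  have h1 : (C * q ^ (1 / n')) ^ q = (C ^ n') ^ m * ((m : ℝ) ^ m * n' ^ m) := by
    rw [Real.mul_rpow hC.le (Real.rpow_nonneg hq0 _)]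
    congr 1
    · rw [← Real.rpow_natCast (C ^ n') m, ← Real.rpow_mul hC.le]
      congr 1
      rw [hq]; ring
    · rw [← Real.rpow_mul hq0]
      have h2 : (1 / n') * q = (m : ℝ) := by rw [hq]; field_simp
      rw [h2, Real.rpow_natCast, hq, mul_pow]
  rw [h1]
  have hfac : (m : ℝ) ^ m ≤ Real.exp 1 ^ m * (Nat.factorial m : ℝ) := by
    have h2 : (m : ℝ) ^ m / (Nat.factorial m : ℝ) ≤ Real.exp (m : ℝ) := by
      refine le_trans ?_ (Real.sum_le_exp_of_nonneg (Nat.cast_nonneg m) (m + 1))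
      exact Finset.single_le_sum (f := fun i => (m : ℝ) ^ i / (Nat.factorial i : ℝ))
        (fun i _ => by positivity) (Finset.self_mem_range_succ m)
    rw [div_le_iff₀ (by positivity)] at h2
    calc (m : ℝ) ^ m ≤ Real.exp (m : ℝ) * (Nat.factorial m : ℝ) := h2
      _ = Real.exp 1 ^ m * (Nat.factorial m : ℝ) := by rw [← Real.exp_one_pow]
  have hm0 : (0 : ℝ) < (Nat.factorial m : ℝ) := by positivity
  rw [div_mul_eq_mul_div, div_le_iff₀ hm0]
  have expand : (α * (n' * Real.exp 1 * C ^ n')) ^ m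
      = α ^ m * (n' ^ m * Real.exp 1 ^ m * (C ^ n') ^ m) := by
    rw [mul_pow, mul_pow, mul_pow]
  rw [expand]
  have hCn' : (0:ℝ) < C ^ n' := Real.rpow_pos_of_pos hC n'
  calc α ^ m * ((C ^ n') ^ m * ((m : ℝ) ^ m * n' ^ m))
      ≤ α ^ m * ((C ^ n') ^ m * ((Real.exp 1 ^ m * (Nat.factorial m : ℝ)) * n' ^ m)) := by
        apply mul_le_mul_of_nonneg_left _ (pow_nonneg hα m)
        apply mul_le_mul_of_nonneg_left _ (by positivity)
        exact mul_le_mul_of_nonneg_right hfac (by positivity)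
    _ = α ^ m * (n' ^ m * Real.exp 1 ^ m * (C ^ n') ^ m) * (Nat.factorial m : ℝ) := by ring

set_option maxHeartbeats 2000000 in
/-- From the Hardy-type inequality, uniform over `q ≥ n`, to the weighted
Trudinger–Moser inequality with any exponent `0 ≤ α < 1/(n' e C^{n'})`. -/
theorem stmt5 {X : Type*} [MeasurableSpace X] (μ : Measure X)
    (ρ : X → ℝ) (hρm : Measurable ρ) (hρ : ∀ x, 0 < ρ x)
    (n : ℕ) (hn : 2 ≤ n) (n' β : ℝ) (hn' : n' = (n : ℝ) / ((n : ℝ) - 1))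
    (hβ0 : 0 ≤ β) (hβ : β < n)
    (F : Set (X → ℝ)) (hFm : ∀ f ∈ F, Measurable f)
    (N : (X → ℝ) → ℝ) (hN0 : ∀ f, 0 ≤ N f)
    (Cfun : ℝ → ℝ) (C : ℝ) (hCpos : 0 < C)
    (hCq : ∀ q : ℝ, (n : ℝ) ≤ q → 0 < Cfun q ∧ Cfun q ≤ C)
    (hHardy : ∀ q : ℝ, (n : ℝ) ≤ q → ∀ f ∈ F,
      (∫⁻ x, ENNReal.ofReal (|f x| ^ q * ρ x ^ (-β)) ∂μ) ^ (1 / q) ≤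
        ENNReal.ofReal (Cfun q * q ^ (1 - 1 / (n : ℝ)) * N f)) :
    ∀ α : ℝ, 0 ≤ α → α < 1 / (n' * Real.exp 1 * C ^ n') →
      ∃ K : ℝ, ∀ f ∈ F, N f ≤ 1 →
        ∫⁻ x, ENNReal.ofReal (ρ x ^ (-β) *
            (Real.exp (α * |f x| ^ n') -
              ∑ k ∈ Finset.range (n - 1), α ^ k * |f x| ^ ((k : ℝ) * n') / (Nat.factorial k : ℝ))) ∂μ ≤
          ENNReal.ofReal K := by
  intro α hα0 hα
  have hnR : (2 : ℝ) ≤ (n : ℝ) := by exact_mod_cast hn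
  have hn1 : (0 : ℝ) < (n : ℝ) - 1 := by linarith
  have hn'pos : 0 < n' := by rw [hn']; positivity
  have hCn' : (0 : ℝ) < C ^ n' := Real.rpow_pos_of_pos hCpos n'
  have hd : (0 : ℝ) < n' * Real.exp 1 * C ^ n' := by positivity
  set r : ℝ := α * (n' * Real.exp 1 * C ^ n') with hrdef
  have hr0 : 0 ≤ r := by positivity
  have hr1 : r < 1 := by
    rw [hrdef]
    calc α * (n' * Real.exp 1 * C ^ n') < (1 / (n' * Real.exp 1 * C ^ n')) * (n' * Real.exp 1 * C ^ n') := by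
          exact mul_lt_mul_of_pos_right hα hd
      _ = 1 := by field_simp
  have h1n : 1 - 1 / (n : ℝ) = 1 / n' := by
    rw [hn', one_div_div]
    field_simp
  refine ⟨∑' k : ℕ, r ^ k, ?_⟩
  intro f hf hNf
  have hfm : Measurable f := hFm f hf
  -- pointwise identity
  have hpt : ∀ x, ρ x ^ (-β) *
      (Real.exp (α * |f x| ^ n') -
        ∑ k ∈ Finset.range (n - 1), α ^ k * |f x| ^ ((k : ℝ) * n') / (Nat.factorial k : ℝ))
      = ∑' k : ℕ, ρ x ^ (-β) *
          ((α * |f x| ^ n') ^ (k + (n - 1)) / (Nat.factorial (k + (n - 1)) : ℝ)) := by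
    intro x
    have hpow : ∀ k : ℕ, (α * |f x| ^ n') ^ k = α ^ k * |f x| ^ ((k : ℝ) * n') := by
      intro k
      rw [mul_pow, ← Real.rpow_natCast (|f x| ^ n') k, ← Real.rpow_mul (abs_nonneg _),
        mul_comm n' (k : ℝ)]
    have hsum := Real.summable_pow_div_factorial (α * |f x| ^ n')
    have hexp : Real.exp (α * |f x| ^ n')
        = ∑' k : ℕ, (α * |f x| ^ n') ^ k / (Nat.factorial k : ℝ) := by
      rw [Real.exp_eq_exp_ℝ, NormedSpace.exp_eq_tsum_div]
    have hsplit := Summable.sum_add_tsum_nat_add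
      (f := fun k : ℕ => (α * |f x| ^ n') ^ k / (Nat.factorial k : ℝ)) (n - 1) hsum
    have hfin : ∑ k ∈ Finset.range (n - 1), α ^ k * |f x| ^ ((k : ℝ) * n') / (Nat.factorial k : ℝ)
        = ∑ k ∈ Finset.range (n - 1), (α * |f x| ^ n') ^ k / (Nat.factorial k : ℝ) :=
      Finset.sum_congr rfl fun k _ => by rw [hpow k]
    rw [tsum_mul_left]
    congr 1
    rw [hfin, hexp, ← hsplit]
    ring
  have hshift : ∀ x, Summable (fun k : ℕ =>
      (α * |f x| ^ n') ^ (k + (n - 1)) / (Nat.factorial (k + (n - 1)) : ℝ)) := fun x =>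
    (summable_nat_add_iff (n - 1)).2 (Real.summable_pow_div_factorial _)
  have hmeas : ∀ m : ℕ, Measurable fun x =>
      ENNReal.ofReal (ρ x ^ (-β) * ((α * |f x| ^ n') ^ m / (Nat.factorial m : ℝ))) := by
    intro m
    apply Measurable.ennreal_ofReal
    fun_prop
  -- per-term bound
  have hbound : ∀ m : ℕ, n - 1 ≤ m →
      ∫⁻ x, ENNReal.ofReal (ρ x ^ (-β) * ((α * |f x| ^ n') ^ m / (Nat.factorial m : ℝ))) ∂μ
        ≤ ENNReal.ofReal (r ^ m) := by
    intro m hm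
    set q : ℝ := (m : ℝ) * n' with hqdef
    have hmcast : (n : ℝ) - 1 ≤ (m : ℝ) := by
      have h1 : ((n - 1 : ℕ) : ℝ) ≤ (m : ℝ) := by exact_mod_cast hm
      rwa [Nat.cast_sub (by omega), Nat.cast_one] at h1
    have hq_n : (n : ℝ) ≤ q := by
      have h2 : ((n : ℝ) - 1) * n' = (n : ℝ) := by
        rw [hn']; field_simp
      calc (n : ℝ) = ((n : ℝ) - 1) * n' := h2.symm
        _ ≤ (m : ℝ) * n' := mul_le_mul_of_nonneg_right hmcast hn'pos.le
    have hqpos : (0 : ℝ) < q := by linarith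
    have hH := hHardy q hq_n f hf
    obtain ⟨hc1, hc2⟩ := hCq q hq_n
    have hA0 : (0 : ℝ) ≤ q ^ (1 - 1 / (n : ℝ)) := Real.rpow_nonneg hqpos.le _
    have hRle : Cfun q * q ^ (1 - 1 / (n : ℝ)) * N f ≤ C * q ^ (1 / n') := by
      rw [← h1n]
      nlinarith [hN0 f, mul_nonneg (mul_nonneg hc1.le hA0) (sub_nonneg.2 hNf),
        mul_nonneg (sub_nonneg.2 hc2) hA0]
    have hI : (∫⁻ x, ENNReal.ofReal (|f x| ^ q * ρ x ^ (-β)) ∂μ)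
        ≤ ENNReal.ofReal ((C * q ^ (1 / n')) ^ q) := by
      have h1 : (∫⁻ x, ENNReal.ofReal (|f x| ^ q * ρ x ^ (-β)) ∂μ) ^ (1 / q)
          ≤ ENNReal.ofReal (C * q ^ (1 / n')) :=
        hH.trans (ENNReal.ofReal_le_ofReal hRle)
      have h2 := ENNReal.rpow_le_rpow h1 hqpos.le
      rw [← ENNReal.rpow_mul, one_div_mul_cancel hqpos.ne', ENNReal.rpow_one] at h2
      rwa [ENNReal.ofReal_rpow_of_nonneg (by positivity) hqpos.le] at h2
    have hptm : ∀ x, ρ x ^ (-β) * ((α * |f x| ^ n') ^ m / (Nat.factorial m : ℝ))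
        = (α ^ m / (Nat.factorial m : ℝ)) * (|f x| ^ q * ρ x ^ (-β)) := by
      intro x
      have h3 : (α * |f x| ^ n') ^ m = α ^ m * |f x| ^ q := by
        rw [mul_pow, ← Real.rpow_natCast (|f x| ^ n') m, ← Real.rpow_mul (abs_nonneg _),
          mul_comm n' (m : ℝ), hqdef]
      rw [h3]; ring
    calc ∫⁻ x, ENNReal.ofReal (ρ x ^ (-β) * ((α * |f x| ^ n') ^ m / (Nat.factorial m : ℝ))) ∂μ
        = ENNReal.ofReal (α ^ m / (Nat.factorial m : ℝ))
            * ∫⁻ x, ENNReal.ofReal (|f x| ^ q * ρ x ^ (-β)) ∂μ := by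
          simp_rw [hptm, ENNReal.ofReal_mul (p := α ^ m / (Nat.factorial m : ℝ)) (by positivity)]
          exact lintegral_const_mul' _ _ ENNReal.ofReal_ne_top
      _ ≤ ENNReal.ofReal (α ^ m / (Nat.factorial m : ℝ))
            * ENNReal.ofReal ((C * q ^ (1 / n')) ^ q) := mul_le_mul_right hI _
      _ = ENNReal.ofReal (α ^ m / (Nat.factorial m : ℝ) * (C * q ^ (1 / n')) ^ q) :=
          (ENNReal.ofReal_mul (by positivity)).symm
      _ ≤ ENNReal.ofReal (r ^ m) := by
          rw [hrdef]
          exact ENNReal.ofReal_le_ofReal (aux_real C n' α hCpos hn'pos hα0 m)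
  -- assemble
  calc ∫⁻ x, ENNReal.ofReal (ρ x ^ (-β) *
            (Real.exp (α * |f x| ^ n') -
              ∑ k ∈ Finset.range (n - 1), α ^ k * |f x| ^ ((k : ℝ) * n') / (Nat.factorial k : ℝ))) ∂μ
      = ∑' k : ℕ, ∫⁻ x, ENNReal.ofReal (ρ x ^ (-β) *
          ((α * |f x| ^ n') ^ (k + (n - 1)) / (Nat.factorial (k + (n - 1)) : ℝ))) ∂μ := by
        have hstep : ∀ x, ENNReal.ofReal (ρ x ^ (-β) *
            (Real.exp (α * |f x| ^ n') -
              ∑ k ∈ Finset.range (n - 1), α ^ k * |f x| ^ ((k : ℝ) * n') / (Nat.factorial k : ℝ)))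
            = ∑' k : ℕ, ENNReal.ofReal (ρ x ^ (-β) *
                ((α * |f x| ^ n') ^ (k + (n - 1)) / (Nat.factorial (k + (n - 1)) : ℝ))) := by
          intro x
          rw [hpt x]
          exact ENNReal.ofReal_tsum_of_nonneg
            (fun k => mul_nonneg (Real.rpow_nonneg (hρ x).le _) (by positivity))
            ((hshift x).mul_left _)
        simp_rw [hstep]
        exact lintegral_tsum fun k => (hmeas _).aemeasurable
    _ ≤ ∑' k : ℕ, ENNReal.ofReal (r ^ (k + (n - 1))) :=
        ENNReal.tsum_le_tsum fun k => hbound _ (Nat.le_add_left _ _)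
    _ ≤ ∑' k : ℕ, ENNReal.ofReal (r ^ k) :=
        ENNReal.tsum_le_tsum fun k => ENNReal.ofReal_le_ofReal
          (pow_le_pow_of_le_one hr0 hr1.le (Nat.le_add_right _ _))
    _ = ENNReal.ofReal (∑' k : ℕ, r ^ k) :=
        (ENNReal.ofReal_tsum_of_nonneg (fun k => pow_nonneg hr0 k)
          (summable_geometric_of_lt_one hr0 hr1)).symm
end

section
/- Let n ≥ 2, n' = n/(n-1), β₁ = β₂ = β with 0 ≤ β < n. Suppose for all q ≥ n and all f in a class F with seminorm G satisfying G(f) ≤ 1, (∫ |f|^q ρ^{-β} dμ)^{1/q} ≤ B · q^{1-1/n} · G(f)^{1-n/q} · (∫ |f|^n ρ^{-β} dμ)^{1/q}. Then for every α with 0 ≤ α < 1/(n'·e·B^{n'}), ∫ ρ^{-β} (1+|f|)^{-n'} (exp(α|f|^{n'}) − ∑_{k=0}^{n-2} α^k|f|^{kn'}/k!) dμ ≤ K(α) · ∫ |f|^n ρ^{-β} dμ for all f with G(f) ≤ 1, where K(α) = ∑_{n'k ≥ n} (α n' k B^{n'})^k / k! < ∞. -/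
open Real MeasureTheory ENNReal

lemma tail_tsum_ite (m : ℕ) (h : ℕ → ℝ) (hnn : ∀ k, 0 ≤ h k) (hs : Summable h) :
    (∑' k, h k) - ∑ k ∈ Finset.range m, h k = ∑' k, if m ≤ k then h k else 0 := by
  set v : ℕ → ℝ := fun k => if m ≤ k then h k else 0 with hv
  set w : ℕ → ℝ := fun k => if m ≤ k then 0 else h k with hw
  have hsv : Summable v := by
    refine hs.of_nonneg_of_le (fun k => ?_) (fun k => ?_) <;>
      by_cases hk : m ≤ k <;> simp [v, hk, hnn k]
  have hsw : Summable w := by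
    apply summable_of_ne_finset_zero (s := Finset.range m)
    intro k hk
    simp only [Finset.mem_range, not_lt] at hk
    simp [w, hk]
  have hws : ∑' k, w k = ∑ k ∈ Finset.range m, h k := by
    rw [tsum_eq_sum (s := Finset.range m) (fun k hk => by
      simp only [Finset.mem_range, not_lt] at hk; simp [w, hk])]
    refine Finset.sum_congr rfl fun k hk => ?_
    simp only [Finset.mem_range] at hk
    simp [w, Nat.not_le.mpr hk]
  have key : (∑' k, h k) = (∑' k, v k) + ∑ k ∈ Finset.range m, h k := by
    rw [← hws, ← Summable.tsum_add hsv hsw]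
    exact tsum_congr fun k => by by_cases hk : m ≤ k <;> simp [v, w, hk]
  linarith

lemma pow_div_fact_le_exp (k : ℕ) : ((k : ℝ)) ^ k / (Nat.factorial k : ℝ) ≤ Real.exp 1 ^ k := by
  have h1 : ((k:ℝ)) ^ k / (Nat.factorial k : ℝ) ≤ Real.exp (k : ℝ) := by
    refine le_trans ?_ (Real.sum_le_exp_of_nonneg (x := (k:ℝ)) (Nat.cast_nonneg k) (k + 1))
    refine Finset.single_le_sum (f := fun i => ((k:ℝ)) ^ i / (Nat.factorial i : ℝ))
      (fun i _ => by positivity) (Finset.self_mem_range_succ k)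
  calc _ ≤ Real.exp (k:ℝ) := h1
    _ = Real.exp 1 ^ k := by rw [← Real.exp_nat_mul]; simp



/-- From the Caffarelli–Kohn–Nirenberg type inequality (with `β₁ = β₂ = β`) to the
Lin–Chen weighted Trudinger–Moser inequality, with explicit constant
`K(α) = ∑_{n'k ≥ n} (α n' k B^{n'})^k / k! < ∞`. -/
theorem stmt9 {X : Type*} [MeasurableSpace X] (μ : Measure X)
    (ρ : X → ℝ) (hρm : Measurable ρ) (hρ : ∀ x, 0 < ρ x)
    (n : ℕ) (hn : 2 ≤ n) (n' β B : ℝ) (hn' : n' = (n : ℝ) / ((n : ℝ) - 1))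
    (hβ0 : 0 ≤ β) (hβ : β < n) (hB : 0 < B)
    (F : Set (X → ℝ)) (hFm : ∀ f ∈ F, Measurable f)
    (G : (X → ℝ) → ℝ) (hG0 : ∀ f, 0 ≤ G f)
    (hCKN : ∀ q : ℝ, (n : ℝ) ≤ q → ∀ f ∈ F, G f ≤ 1 →
      (∫⁻ x, ENNReal.ofReal (|f x| ^ q * ρ x ^ (-β)) ∂μ) ^ (1 / q) ≤
        ENNReal.ofReal (B * q ^ (1 - 1 / (n : ℝ)) * G f ^ (1 - (n : ℝ) / q)) *
          (∫⁻ x, ENNReal.ofReal (|f x| ^ (n : ℝ) * ρ x ^ (-β)) ∂μ) ^ (1 / q)) :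
    ∀ α : ℝ, 0 ≤ α → α < 1 / (n' * Real.exp 1 * B ^ n') →
      Summable (fun k : ℕ =>
        if (n : ℝ) ≤ n' * k then (α * n' * k * B ^ n') ^ k / (Nat.factorial k : ℝ) else 0) ∧
      ∀ f ∈ F, G f ≤ 1 →
        ∫⁻ x, ENNReal.ofReal (ρ x ^ (-β) * (1 + |f x|) ^ (-n') *
            (Real.exp (α * |f x| ^ n') -
              ∑ k ∈ Finset.range (n - 1),
                α ^ k * |f x| ^ ((k : ℝ) * n') / (Nat.factorial k : ℝ))) ∂μ ≤
          ENNReal.ofReal (∑' k : ℕ,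
              if (n : ℝ) ≤ n' * k then (α * n' * k * B ^ n') ^ k / (Nat.factorial k : ℝ) else 0) *
            ∫⁻ x, ENNReal.ofReal (|f x| ^ (n : ℝ) * ρ x ^ (-β)) ∂μ := by
  intro α hα0 hα1
  have hn0 : (0:ℝ) < n := by positivity
  have hn2 : (2:ℝ) ≤ n := by exact_mod_cast hn
  have hn1 : (0:ℝ) < (n:ℝ) - 1 := by linarith
  have hn'pos : 0 < n' := by rw [hn']; positivity
  have hBn' : 0 < B ^ n' := Real.rpow_pos_of_pos hB n'
  have hCpos : 0 < n' * Real.exp 1 * B ^ n' := by positivity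
  have hr1 : α * (n' * Real.exp 1 * B ^ n') < 1 := by
    rw [← lt_div_iff₀ hCpos]; exact hα1
  have hr0 : 0 ≤ α * (n' * Real.exp 1 * B ^ n') := by positivity
  have hcast : ((n - 1 : ℕ) : ℝ) = (n:ℝ) - 1 := by
    have h1 : (1:ℕ) ≤ n := by omega
    push_cast [h1]; ring
  have hcond : ∀ k : ℕ, ((n:ℝ) ≤ n' * k ↔ n - 1 ≤ k) := by
    intro k
    rw [hn', div_mul_eq_mul_div, le_div_iff₀ hn1, ← Nat.cast_le (α := ℝ), hcast]
    constructor
    · intro hx; nlinarith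
    · intro hx; nlinarith
  set c : ℕ → ℝ := fun k => (α * n' * k * B ^ n') ^ k / (Nat.factorial k : ℝ) with hc
  set v : ℕ → ℝ := fun k => if (n:ℝ) ≤ n' * k then c k else 0 with hv
  have hcnn : ∀ k, 0 ≤ c k := fun k => by
    have : 0 ≤ α * n' * k * B ^ n' := by positivity
    positivity
  have hvnn : ∀ k, 0 ≤ v k := fun k => by
    by_cases hk : (n:ℝ) ≤ n' * k <;> simp [v, hk, hcnn k]
  have hvle : ∀ k, v k ≤ (α * (n' * Real.exp 1 * B ^ n')) ^ k := by
    intro k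
    have hle : c k ≤ (α * (n' * Real.exp 1 * B ^ n')) ^ k := by
      have h1 : c k = (α * n' * B ^ n') ^ k * ((k:ℝ) ^ k / (Nat.factorial k : ℝ)) := by
        simp only [hc]
        rw [show α * n' * (k:ℝ) * B ^ n' = (α * n' * B ^ n') * (k:ℝ) by ring, mul_pow]
        ring
      rw [h1]
      calc (α * n' * B ^ n') ^ k * ((k:ℝ) ^ k / (Nat.factorial k : ℝ))
          ≤ (α * n' * B ^ n') ^ k * Real.exp 1 ^ k := by
            refine mul_le_mul_of_nonneg_left (pow_div_fact_le_exp k) (by positivity)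
        _ = (α * (n' * Real.exp 1 * B ^ n')) ^ k := by
            rw [← mul_pow]; congr 1; ring
    by_cases hk : (n:ℝ) ≤ n' * k
    · simpa [v, hk] using hle
    · simp [v, hk]; positivity
  have hsumv : Summable v :=
    Summable.of_nonneg_of_le hvnn hvle (summable_geometric_of_lt_one hr0 hr1)
  refine ⟨hsumv, ?_⟩
  intro f hfF hGf
  have hfm : Measurable f := hFm f hfF
  set I := ∫⁻ x, ENNReal.ofReal (|f x| ^ (n:ℝ) * ρ x ^ (-β)) ∂μ with hI
  have hJ : ∀ q : ℝ, (n:ℝ) ≤ q →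
      (∫⁻ x, ENNReal.ofReal (|f x| ^ q * ρ x ^ (-β)) ∂μ) ≤
        ENNReal.ofReal ((B * q ^ (1 - 1/(n:ℝ))) ^ q) * I := by
    intro q hq
    have hqpos : (0:ℝ) < q := lt_of_lt_of_le hn0 hq
    have hG1 : G f ^ (1 - (n:ℝ)/q) ≤ 1 := by
      apply Real.rpow_le_one (hG0 f) hGf
      have : (n:ℝ)/q ≤ 1 := (div_le_one hqpos).mpr hq
      linarith
    have hBq : 0 < B * q ^ (1 - 1/(n:ℝ)) := by positivity
    have h2 : (∫⁻ x, ENNReal.ofReal (|f x| ^ q * ρ x ^ (-β)) ∂μ) ^ (1/q) ≤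
        ENNReal.ofReal (B * q ^ (1 - 1/(n:ℝ))) * I ^ (1/q) := by
      refine (hCKN q hq f hfF hGf).trans (mul_le_mul_left (ENNReal.ofReal_le_ofReal ?_) _)
      calc B * q ^ (1 - 1/(n:ℝ)) * G f ^ (1 - (n:ℝ)/q) ≤ B * q ^ (1 - 1/(n:ℝ)) * 1 :=
            mul_le_mul_of_nonneg_left hG1 (by positivity)
        _ = B * q ^ (1 - 1/(n:ℝ)) := mul_one _
    have h3 := ENNReal.rpow_le_rpow h2 hqpos.le
    rw [ENNReal.mul_rpow_of_nonneg _ _ hqpos.le, ← ENNReal.rpow_mul, ← ENNReal.rpow_mul,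
      one_div_mul_cancel hqpos.ne', ENNReal.rpow_one, ENNReal.rpow_one,
      ENNReal.ofReal_rpow_of_pos hBq] at h3
    exact h3
  have hreal : ∀ k : ℕ, (n:ℝ) ≤ n' * k →
      α ^ k / (Nat.factorial k : ℝ) * (B * (n' * k) ^ (1 - 1/(n:ℝ))) ^ (n' * (k:ℝ)) = c k := by
    intro k hk
    have hq : (0:ℝ) < n' * k := lt_of_lt_of_le hn0 hk
    have hqk : (1 - 1/(n:ℝ)) * (n' * (k:ℝ)) = (k:ℝ) := by
      rw [hn']; field_simp
    have h1 : (B * (n' * (k:ℝ)) ^ (1 - 1/(n:ℝ))) ^ (n' * (k:ℝ)) =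
        (B ^ n') ^ k * (n' * (k:ℝ)) ^ k := by
      rw [Real.mul_rpow hB.le (Real.rpow_nonneg hq.le _), ← Real.rpow_mul hq.le, hqk,
        Real.rpow_natCast, Real.rpow_mul hB.le, Real.rpow_natCast]
    rw [h1, hc]
    simp only []
    rw [div_mul_eq_mul_div]
    congr 1
    rw [← mul_pow, ← mul_pow]
    congr 1
    ring
  set u : ℕ → X → ℝ≥0∞ := fun k x => ENNReal.ofReal
    (if (n:ℝ) ≤ n' * k then α ^ k * |f x| ^ ((k:ℝ) * n') / (Nat.factorial k : ℝ) * ρ x ^ (-β)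
      else 0) with hu
  have hum : ∀ k, Measurable (u k) := by
    intro k
    by_cases hk : (n:ℝ) ≤ n' * k
    · simp only [hu, hk, if_true]
      exact (((measurable_const.mul ((hfm.abs).pow measurable_const)).div
        measurable_const).mul (hρm.pow measurable_const)).ennreal_ofReal
    · simp only [hu, hk, if_false]
      exact measurable_const
  have hterm : ∀ k, ∫⁻ x, u k x ∂μ ≤ ENNReal.ofReal (v k) * I := by
    intro k
    by_cases hk : (n:ℝ) ≤ n' * k
    · simp only [hu, hk, if_true, hv]
      have heq : ∀ x, ENNReal.ofReal
          (α ^ k * |f x| ^ ((k:ℝ) * n') / (Nat.factorial k : ℝ) * ρ x ^ (-β)) =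
          ENNReal.ofReal (α ^ k / (Nat.factorial k : ℝ)) *
            ENNReal.ofReal (|f x| ^ (n' * (k:ℝ)) * ρ x ^ (-β)) := by
        intro x
        rw [← ENNReal.ofReal_mul (by positivity)]
        congr 1
        rw [mul_comm (k:ℝ) n']
        ring
      calc ∫⁻ x, ENNReal.ofReal
              (α ^ k * |f x| ^ ((k:ℝ) * n') / (Nat.factorial k : ℝ) * ρ x ^ (-β)) ∂μ
          = ENNReal.ofReal (α ^ k / (Nat.factorial k : ℝ)) *
              ∫⁻ x, ENNReal.ofReal (|f x| ^ (n' * (k:ℝ)) * ρ x ^ (-β)) ∂μ := by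
            simp_rw [heq]
            exact lintegral_const_mul' _ _ ENNReal.ofReal_ne_top
        _ ≤ ENNReal.ofReal (α ^ k / (Nat.factorial k : ℝ)) *
              (ENNReal.ofReal ((B * (n' * (k:ℝ)) ^ (1 - 1/(n:ℝ))) ^ (n' * (k:ℝ))) * I) :=
            mul_le_mul_right (hJ (n' * (k:ℝ)) hk) _
        _ = ENNReal.ofReal (α ^ k / (Nat.factorial k : ℝ) *
              (B * (n' * (k:ℝ)) ^ (1 - 1/(n:ℝ))) ^ (n' * (k:ℝ))) * I := by
            rw [← mul_assoc, ← ENNReal.ofReal_mul (by positivity)]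
        _ = ENNReal.ofReal (c k) * I := by rw [hreal k hk]
    · simp [hu, hk, hv]
  have hpt : ∀ x, ENNReal.ofReal (ρ x ^ (-β) * (1 + |f x|) ^ (-n') *
      (Real.exp (α * |f x| ^ n') - ∑ k ∈ Finset.range (n - 1),
        α ^ k * |f x| ^ ((k : ℝ) * n') / (Nat.factorial k : ℝ))) ≤ ∑' k, u k x := by
    intro x
    set t := |f x| with ht
    have ht0 : (0:ℝ) ≤ t := abs_nonneg _
    set h : ℕ → ℝ := fun k => α ^ k * t ^ ((k:ℝ) * n') / (Nat.factorial k : ℝ) with hhdef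
    have hh : ∀ k, h k = (α * t ^ n') ^ k / (Nat.factorial k : ℝ) := by
      intro k
      simp only [hhdef]
      rw [mul_pow, mul_comm (k:ℝ) n', Real.rpow_mul ht0, Real.rpow_natCast]
    have hhs : Summable h := by
      rw [show h = fun k => (α * t ^ n') ^ k / (Nat.factorial k : ℝ) from funext hh]
      exact Real.summable_pow_div_factorial _
    have hhnn : ∀ k, 0 ≤ h k := fun k => by
      simp only [hhdef]
      exact div_nonneg (mul_nonneg (pow_nonneg hα0 _) (Real.rpow_nonneg ht0 _))
        (Nat.cast_nonneg _)
    have hexp : Real.exp (α * t ^ n') = ∑' k, h k := by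
      rw [Real.exp_eq_exp_ℝ, NormedSpace.exp_eq_tsum_div]
      exact tsum_congr fun k => (hh k).symm
    have hS : Real.exp (α * t ^ n') - ∑ k ∈ Finset.range (n-1), h k =
        ∑' k : ℕ, if (n:ℝ) ≤ n' * (k:ℝ) then h k else 0 := by
      rw [hexp, tail_tsum_ite (n-1) h hhnn hhs]
      exact tsum_congr fun k => if_congr (hcond k).symm rfl rfl
    have hitenn : ∀ k : ℕ, 0 ≤ if (n:ℝ) ≤ n' * (k:ℝ) then h k else 0 := fun k => by
      by_cases hk : (n:ℝ) ≤ n' * k <;> simp [hk, hhnn k]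
    have hites : Summable (fun k : ℕ => if (n:ℝ) ≤ n' * (k:ℝ) then h k else 0) := by
      refine hhs.of_nonneg_of_le hitenn (fun k => ?_)
      by_cases hk : (n:ℝ) ≤ n' * k <;> simp [hk, hhnn k]
    have hSnn : 0 ≤ ∑' k : ℕ, if (n:ℝ) ≤ n' * (k:ℝ) then h k else 0 := tsum_nonneg hitenn
    have h1t : (1 + t) ^ (-n') ≤ 1 :=
      Real.rpow_le_one_of_one_le_of_nonpos (by linarith) (by linarith)
    have hρx : (0:ℝ) ≤ ρ x ^ (-β) := (Real.rpow_pos_of_pos (hρ x) _).le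
    calc ENNReal.ofReal (ρ x ^ (-β) * (1 + t) ^ (-n') *
            (Real.exp (α * t ^ n') - ∑ k ∈ Finset.range (n - 1),
              α ^ k * t ^ ((k : ℝ) * n') / (Nat.factorial k : ℝ)))
        ≤ ENNReal.ofReal (ρ x ^ (-β) *
            ∑' k : ℕ, if (n:ℝ) ≤ n' * (k:ℝ) then h k else 0) := by
          apply ENNReal.ofReal_le_ofReal
          have : (∑ k ∈ Finset.range (n - 1),
              α ^ k * t ^ ((k : ℝ) * n') / (Nat.factorial k : ℝ)) =
              ∑ k ∈ Finset.range (n - 1), h k := rfl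
          rw [this]
          calc ρ x ^ (-β) * (1 + t) ^ (-n') *
                (Real.exp (α * t ^ n') - ∑ k ∈ Finset.range (n-1), h k)
              ≤ ρ x ^ (-β) * 1 *
                (Real.exp (α * t ^ n') - ∑ k ∈ Finset.range (n-1), h k) := by
                have hSnn' : 0 ≤ Real.exp (α * t ^ n') - ∑ k ∈ Finset.range (n-1), h k := by
                  rw [hS]; exact hSnn
                exact mul_le_mul_of_nonneg_right (mul_le_mul_of_nonneg_left h1t hρx) hSnn'
            _ = ρ x ^ (-β) *
                (Real.exp (α * t ^ n') - ∑ k ∈ Finset.range (n-1), h k) := by ring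
            _ = ρ x ^ (-β) * ∑' k : ℕ, if (n:ℝ) ≤ n' * (k:ℝ) then h k else 0 := by rw [hS]
      _ = ∑' k, u k x := by
          rw [← tsum_mul_left,
            ENNReal.ofReal_tsum_of_nonneg (fun k => mul_nonneg hρx (hitenn k))
              (hites.mul_left _)]
          refine tsum_congr fun k => ?_
          simp only [hu]
          congr 1
          by_cases hk : (n:ℝ) ≤ n' * k
          · simp only [hk, if_true]; ring
          · simp [hk]
  calc ∫⁻ x, ENNReal.ofReal (ρ x ^ (-β) * (1 + |f x|) ^ (-n') *
          (Real.exp (α * |f x| ^ n') - ∑ k ∈ Finset.range (n - 1),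
            α ^ k * |f x| ^ ((k : ℝ) * n') / (Nat.factorial k : ℝ))) ∂μ
      ≤ ∫⁻ x, ∑' k, u k x ∂μ := lintegral_mono hpt
    _ = ∑' k, ∫⁻ x, u k x ∂μ := lintegral_tsum fun k => (hum k).aemeasurable
    _ ≤ ∑' k, ENNReal.ofReal (v k) * I := ENNReal.tsum_le_tsum hterm
    _ = (∑' k, ENNReal.ofReal (v k)) * I := ENNReal.tsum_mul_right
    _ = ENNReal.ofReal (∑' k, v k) * I := by
        rw [ENNReal.ofReal_tsum_of_nonneg hvnn hsumv]
end
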